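/- arXiv:2211.04051 — 2 statements merged into one kernel-verified Lean document; each statement's English description precedes it below -/
import Mathlib

section
/- Let A ∈ ℝ^{n×n}, B ∈ ℝ^{n×m}, R ∈ ℝ^{m×m} symmetric positive definite, P* ∈ ℝ^{n×n} symmetric positive semidefinite with R + BᵀP*B invertible, and set X* = (R + BᵀP*B)^{-1}BᵀP*A. Suppose X ∈ ℝ^{m×n} satisfies the Lyapunov identity P* = Q + XᵀRX + (A − BX)ᵀP*(A − BX) and P* also satisfies P* = Q + (X*)ᵀRX* + (A − BX*)ᵀP*(A − BX*). Then X = X*. -/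
open Matrix

/-!
Write `S = R + BᵀP*B`. Since `S X* = BᵀP*A`, completing the square in `X` gives
`XᵀRX + (A - BX)ᵀP*(A - BX) = AᵀP*A - X*ᵀSX* + (X - X*)ᵀS(X - X*)`.
Both Lyapunov identities equate `P*` with `Q` plus this quantity, at `X` and at `X*`, so
`(X - X*)ᵀS(X - X*) = 0`; as `S` is positive definite, `X = X*`.
-/

theorem Matrix.quadratic_cost_eq_add_completed_square {ι κ ν α : Type*} [Fintype ι] [Fintype κ]
    [CommRing α] {R : Matrix κ κ α} {P : Matrix ι ι α} (hR : R.IsSymm) (hP : P.IsSymm)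
    (A : Matrix ι ν α) (B : Matrix ι κ α) {Xs : Matrix κ ν α}
    (hXs : (R + Bᵀ * P * B) * Xs = Bᵀ * P * A) (X : Matrix κ ν α) :
    Xᵀ * R * X + (A - B * X)ᵀ * P * (A - B * X) =
      Aᵀ * P * A - Xsᵀ * (R + Bᵀ * P * B) * Xs
        + (X - Xs)ᵀ * (R + Bᵀ * P * B) * (X - Xs) := by
  set S := R + Bᵀ * P * B
  have hS : Sᵀ = S := by
    simp only [S, transpose_add, transpose_mul, hR.eq, hP.eq, transpose_transpose,
      Matrix.mul_assoc]
  have hXsS : Xsᵀ * S = Aᵀ * P * B := by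
    rw [← hS, ← transpose_mul, hXs]
    simp only [transpose_mul, hP.eq, transpose_transpose, Matrix.mul_assoc]
  calc Xᵀ * R * X + (A - B * X)ᵀ * P * (A - B * X)
      = Aᵀ * P * A + Xᵀ * S * X - Xᵀ * (Bᵀ * P * A) - Aᵀ * P * B * X := by
        simp only [S, transpose_sub, transpose_mul, Matrix.sub_mul, Matrix.mul_sub,
          Matrix.add_mul, Matrix.mul_add, Matrix.mul_assoc]
        abel
    _ = Aᵀ * P * A - Xsᵀ * S * Xs + (X - Xs)ᵀ * S * (X - Xs) := by
        rw [← hXs, ← hXsS]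
        simp only [transpose_sub, Matrix.sub_mul, Matrix.mul_sub, Matrix.mul_assoc]
        abel

theorem Matrix.PosDef.eq_zero_of_conjTranspose_mul_mul_same_eq_zero {m n R : Type*}
    [Fintype m] [Fintype n] [CommRing R] [PartialOrder R] [StarRing R]
    {S : Matrix n n R} (hS : S.PosDef) {E : Matrix n m R} (h : Eᴴ * S * E = 0) : E = 0 := by
  refine mulVec_injective (funext fun x => ?_)
  by_contra hx
  rw [zero_mulVec] at hx
  have hpos := hS.dotProduct_mulVec_pos hx
  simp only [star_mulVec, dotProduct_mulVec, vecMul_vecMul, h] at hpos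
  simp at hpos

theorem stmt4_general (n m : ℕ)
    (A : Matrix (Fin n) (Fin n) ℝ) (B : Matrix (Fin n) (Fin m) ℝ)
    (R : Matrix (Fin m) (Fin m) ℝ) (hR : R.PosDef)
    (Pstar : Matrix (Fin n) (Fin n) ℝ) (hP : Pstar.PosSemidef)
    (Q : Matrix (Fin n) (Fin n) ℝ)
    (Xstar : Matrix (Fin m) (Fin n) ℝ)
    (hXstar : Xstar = (R + Bᵀ * Pstar * B)⁻¹ * Bᵀ * Pstar * A)
    (X : Matrix (Fin m) (Fin n) ℝ)
    (hX : Pstar = Q + Xᵀ * R * X + (A - B * X)ᵀ * Pstar * (A - B * X))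
    (hXs : Pstar = Q + Xstarᵀ * R * Xstar
        + (A - B * Xstar)ᵀ * Pstar * (A - B * Xstar)) :
    X = Xstar := by
  have hS : (R + Bᵀ * Pstar * B).PosDef := by
    simpa using hR.add_posSemidef (hP.conjTranspose_mul_mul_same B)
  have hSXstar : (R + Bᵀ * Pstar * B) * Xstar = Bᵀ * Pstar * A := by
    rw [hXstar, ← Matrix.mul_assoc, ← Matrix.mul_assoc, ← Matrix.mul_assoc,
      mul_nonsing_inv _ ((isUnit_iff_isUnit_det _).mp hS.isUnit), Matrix.one_mul]
  have hcost := quadratic_cost_eq_add_completed_square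
    (isHermitian_iff_isSymm.mp hR.isHermitian) (isHermitian_iff_isSymm.mp hP.isHermitian) A B
    hSXstar
  have hgap : (X - Xstar)ᵀ * (R + Bᵀ * Pstar * B) * (X - Xstar) = 0 := by
    have hcost_eq := hX.symm.trans hXs
    rw [add_assoc, add_assoc, hcost X, hcost Xstar] at hcost_eq
    simpa using hcost_eq
  refine sub_eq_zero.mp (hS.eq_zero_of_conjTranspose_mul_mul_same_eq_zero ?_)
  rwa [conjTranspose_eq_transpose_of_trivial]

theorem stmt4 (n m : ℕ)
    (A : Matrix (Fin n) (Fin n) ℝ) (B : Matrix (Fin n) (Fin m) ℝ)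
    (R : Matrix (Fin m) (Fin m) ℝ) (hR : R.PosDef)
    (Pstar : Matrix (Fin n) (Fin n) ℝ) (hP : Pstar.PosSemidef)
    (Q : Matrix (Fin n) (Fin n) ℝ) (hQ : Q.PosSemidef)
    (hinv : IsUnit (R + Bᵀ * Pstar * B))
    (Xstar : Matrix (Fin m) (Fin n) ℝ)
    (hXstar : Xstar = (R + Bᵀ * Pstar * B)⁻¹ * Bᵀ * Pstar * A)
    (X : Matrix (Fin m) (Fin n) ℝ)
    (hX : Pstar = Q + Xᵀ * R * X + (A - B * X)ᵀ * Pstar * (A - B * X))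
    (hXs : Pstar = Q + Xstarᵀ * R * Xstar
        + (A - B * Xstar)ᵀ * Pstar * (A - B * Xstar)) :
    X = Xstar :=
  stmt4_general n m A B R hR Pstar hP Q Xstar hXstar X hX hXs
end

section
/- Let S ∈ ℝ^{n×q} have full row rank with right pseudo-inverse S†, and let P, Q_c ∈ ℝ^{n×n} be symmetric, A ∈ ℝ^{n×n}, B ∈ ℝ^{n×m}, R ∈ ℝ^{m×m}, K ∈ ℝ^{m×q}. If SᵀPS = SᵀQ_cS + KᵀRK + (AS − BK)ᵀP(AS − BK), then P = Q_c + (S†)ᵀKᵀRKS† + (A − BKS†)ᵀP(A − BKS†). -/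
open Matrix

theorem stmt11 (n q m : ℕ) (S : Matrix (Fin n) (Fin q) ℝ)
    (hS : S.rank = n)
    (Sd : Matrix (Fin q) (Fin n) ℝ) (hSd : Sd = Sᵀ * (S * Sᵀ)⁻¹)
    (P Qc : Matrix (Fin n) (Fin n) ℝ) (hP : P.IsSymm) (hQc : Qc.IsSymm)
    (A : Matrix (Fin n) (Fin n) ℝ) (B : Matrix (Fin n) (Fin m) ℝ)
    (R : Matrix (Fin m) (Fin m) ℝ) (K : Matrix (Fin m) (Fin q) ℝ)
    (h : Sᵀ * P * S = Sᵀ * Qc * S + Kᵀ * R * K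
        + (A * S - B * K)ᵀ * P * (A * S - B * K)) :
    P = Qc + Sdᵀ * Kᵀ * R * K * Sd
        + (A - B * K * Sd)ᵀ * P * (A - B * K * Sd) := by
  have hrank : (S * Sᵀ).rank = n := by rw [Matrix.rank_self_mul_transpose, hS]
  have hunit : IsUnit (S * Sᵀ) := by
    rw [← Matrix.mulVec_surjective_iff_isUnit]
    have htop : LinearMap.range (S * Sᵀ).mulVecLin = ⊤ := by
      apply Submodule.eq_top_of_finrank_eq
      rw [← Matrix.rank]
      simp [hrank]
    intro y
    have : y ∈ LinearMap.range (S * Sᵀ).mulVecLin := htop ▸ Submodule.mem_top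
    obtain ⟨x, hx⟩ := this
    exact ⟨x, hx⟩
  have hdet : IsUnit (S * Sᵀ).det := (Matrix.isUnit_iff_isUnit_det _).mp hunit
  have hSSd : S * Sd = 1 := by
    rw [hSd, ← Matrix.mul_assoc, Matrix.mul_nonsing_inv _ hdet]
  have hSdT : Sdᵀ * Sᵀ = 1 := by
    rw [← Matrix.transpose_mul, hSSd, Matrix.transpose_one]
  have key := congrArg (fun M => Sdᵀ * M * Sd) h
  have e1 : Sdᵀ * (Sᵀ * P * S) * Sd = P := by
    calc Sdᵀ * (Sᵀ * P * S) * Sd = (Sdᵀ * Sᵀ) * P * (S * Sd) := by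
          simp only [Matrix.mul_assoc]
      _ = P := by rw [hSdT, hSSd, Matrix.one_mul, Matrix.mul_one]
  have e2 : Sdᵀ * (Sᵀ * Qc * S) * Sd = Qc := by
    calc Sdᵀ * (Sᵀ * Qc * S) * Sd = (Sdᵀ * Sᵀ) * Qc * (S * Sd) := by
          simp only [Matrix.mul_assoc]
      _ = Qc := by rw [hSdT, hSSd, Matrix.one_mul, Matrix.mul_one]
  have e3 : (A * S - B * K) * Sd = A - B * K * Sd := by
    rw [Matrix.sub_mul, Matrix.mul_assoc, hSSd, Matrix.mul_one, Matrix.mul_assoc]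
  have e4 : Sdᵀ * ((A * S - B * K)ᵀ * P * (A * S - B * K)) * Sd
      = (A - B * K * Sd)ᵀ * P * (A - B * K * Sd) := by
    rw [← e3]
    rw [Matrix.transpose_mul]
    simp only [Matrix.mul_assoc]
  rw [Matrix.mul_add, Matrix.mul_add, Matrix.add_mul, Matrix.add_mul] at key
  rw [e1, e2, e4] at key
  simp only [Matrix.mul_assoc] at key ⊢
  exact key
end
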